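/- (Two-step fully adaptive composition; key inductive step.) Let ν and ν' be probability measures on a measurable space Ω₁, and let η, η' be Markov kernels from Ω₁ to a measurable space Ω₂. Let μ₁ ≥ 0 be a constant with max{H_α(ν‖ν'), H_α(ν'‖ν)} ≤ H_α(N(μ₁,1)‖N(0,1)) for all real α > 0, and let μ₂ : Ω₁ → [0, ∞) be measurable with max{H_α(η(a)‖η'(a)), H_α(η'(a)‖η(a))} ≤ H_α(N(μ₂(a),1)‖N(0,1)) for every a ∈ Ω₁ and all real α > 0. Let B ≥ 0 and suppose μ₁² + μ₂(a)² ≤ B² for ν-almost every and ν'-almost every a. Then for every real α > 0: max{ H_α(ν ⊗ η‖ν' ⊗ η'), H_α(ν' ⊗ η'‖ν ⊗ η) } ≤ H_α(N(B,1)‖N(0,1)). -/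

import Mathlib

/-!
Any test `E` for `ν ⊗ η` against `ν' ⊗ η'` is, slice by slice, no more powerful than a
Neyman–Pearson threshold test `{t > c}` for `N(m,1)` against `N(0,1)` of the same size, because
each pair `(η a, η' a)` is `m`-dominated. Hence the adaptive composition is dominated by the
non-adaptive pair `ν × N(m,1)`, `ν' × N(0,1)`, and repeating the argument on the first factor
reduces everything to `N(m,1) × N(μ₁,1)` against `N(0,1) × N(0,1)`. The likelihood ratio of this
pair only depends on the projection onto the direction `(m, μ₁)`, which is distributed as
`N(√(m² + μ₁²), 1)` resp. `N(0,1)`. The uniform parameter `m = √(B² - μ₁²)` is admissible because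
`H_α(N(μ,1)‖N(0,1))` is monotone in `|μ|`, which follows from the product bound by projecting to
the first coordinate.
-/

open MeasureTheory ProbabilityTheory Real

/-- Hockey-stick divergence `H_α(P‖Q) = sup_E (P(E) − α·Q(E))`. -/
noncomputable def hockeyStick {Ω : Type*} [MeasurableSpace Ω] (α : ℝ) (P Q : Measure Ω) : ℝ :=
  ⨆ E : {E : Set Ω // MeasurableSet E}, ((P E).toReal - α * (Q E).toReal)

open Set Filter
open scoped ENNReal Topology

section HockeyStick

variable {X Y : Type*} [MeasurableSpace X] [MeasurableSpace Y] {α : ℝ}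

lemma bddAbove_range_hockeyStick (hα : 0 ≤ α) (P Q : Measure X) [IsFiniteMeasure P] :
    BddAbove (range fun E : {E : Set X // MeasurableSet E} => P.real E - α * Q.real E) := by
  refine ⟨P.real univ, ?_⟩
  rintro _ ⟨E, rfl⟩
  have : 0 ≤ α * Q.real E := by positivity
  linarith [measureReal_mono (μ := P) (subset_univ E.1)]

lemma le_hockeyStick (hα : 0 ≤ α) (P Q : Measure X) [IsFiniteMeasure P] {E : Set X}
    (hE : MeasurableSet E) : P.real E - α * Q.real E ≤ hockeyStick α P Q :=
  le_ciSup (bddAbove_range_hockeyStick hα P Q) ⟨E, hE⟩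

lemma hockeyStick_le {P Q : Measure X} {c : ℝ}
    (h : ∀ E, MeasurableSet E → P.real E - α * Q.real E ≤ c) : hockeyStick α P Q ≤ c :=
  ciSup_le fun E => h E.1 E.2

lemma hockeyStick_self (hα : 0 ≤ α) (P : Measure X) [IsProbabilityMeasure P] :
    hockeyStick α P P = max (1 - α) 0 := by
  refine le_antisymm (hockeyStick_le fun E _ => ?_) (max_le ?_ ?_)
  · have h0 : 0 ≤ P.real E := measureReal_nonneg
    have h1 : P.real E ≤ 1 := measureReal_le_one
    rcases le_total α 1 with h | h
    · exact le_max_of_le_left (by nlinarith)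
    · exact le_max_of_le_right (by nlinarith)
  · simpa using le_hockeyStick hα P P MeasurableSet.univ
  · simpa using le_hockeyStick hα P P MeasurableSet.empty

lemma hockeyStick_le_of_forall_exists {P Q : Measure X} {P' Q' : Measure Y} [IsFiniteMeasure Q]
    [IsFiniteMeasure P'] (hα : 0 ≤ α)
    (h : ∀ E, MeasurableSet E → ∃ S, MeasurableSet S ∧ P E ≤ P' S ∧ Q' S ≤ Q E) :
    hockeyStick α P Q ≤ hockeyStick α P' Q' := by
  refine hockeyStick_le fun E hE => ?_
  obtain ⟨S, hS, hPS, hQS⟩ := h E hE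
  have hP : P.real E ≤ P'.real S := ENNReal.toReal_mono (measure_ne_top _ _) hPS
  have hQ : Q'.real S ≤ Q.real E := ENNReal.toReal_mono (measure_ne_top _ _) hQS
  have := le_hockeyStick hα P' Q' hS
  nlinarith

lemma hockeyStick_map_le (hα : 0 ≤ α) {P Q : Measure X} [IsFiniteMeasure P] [IsFiniteMeasure Q]
    {f : X → Y} (hf : Measurable f) : hockeyStick α (P.map f) (Q.map f) ≤ hockeyStick α P Q :=
  hockeyStick_le_of_forall_exists hα fun E hE =>
    ⟨f ⁻¹' E, hf hE, (Measure.map_apply hf hE).le, (Measure.map_apply hf hE).ge⟩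

/-- Neyman–Pearson: a likelihood-ratio test is optimal. -/
lemma hockeyStick_le_of_eq_withDensity {P Q : Measure X} [IsFiniteMeasure P] [IsFiniteMeasure Q]
    {r : X → ℝ≥0∞} (hP : P = Q.withDensity r) (hα : 0 ≤ α) {S : Set X} (hS : MeasurableSet S)
    (h_mem : ∀ x ∈ S, ENNReal.ofReal α ≤ r x) (h_not_mem : ∀ x ∉ S, r x ≤ ENNReal.ofReal α) :
    hockeyStick α P Q ≤ P.real S - α * Q.real S := by
  refine hockeyStick_le fun E hE => ?_
  have h_out : P.real (E \ S) ≤ α * Q.real (E \ S) := by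
    have h : P (E \ S) ≤ ENNReal.ofReal α * Q (E \ S) := by
      rw [hP, withDensity_apply _ (hE.diff hS), ← setLIntegral_const]
      exact setLIntegral_mono measurable_const fun x hx => h_not_mem x hx.2
    simpa [measureReal_def, ENNReal.toReal_mul, hα] using ENNReal.toReal_mono (by finiteness) h
  have h_in : α * Q.real (S \ E) ≤ P.real (S \ E) := by
    have h : ENNReal.ofReal α * Q (S \ E) ≤ P (S \ E) := by
      rw [hP, withDensity_apply _ (hS.diff hE), ← setLIntegral_const]
      exact setLIntegral_mono' (hS.diff hE) fun x hx => h_mem x hx.1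
    simpa [measureReal_def, ENNReal.toReal_mul, hα] using ENNReal.toReal_mono (measure_ne_top _ _) h
  rw [← measureReal_inter_add_sdiff (μ := P) (s := E) hS,
    ← measureReal_inter_add_sdiff (μ := Q) (s := E) hS,
    ← measureReal_inter_add_sdiff (μ := P) (s := S) hE,
    ← measureReal_inter_add_sdiff (μ := Q) (s := S) hE, inter_comm S E]
  nlinarith [measureReal_nonneg (μ := Q) (s := E \ S)]

end HockeyStick

section Gaussian

lemma gaussianReal_eq_withDensity (m : ℝ) :
    gaussianReal m 1 =
      (gaussianReal 0 1).withDensity fun x => ENNReal.ofReal (exp (m * x - m ^ 2 / 2)) := by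
  rw [gaussianReal_of_var_ne_zero m one_ne_zero, gaussianReal_of_var_ne_zero 0 one_ne_zero,
    ← withDensity_mul _ (measurable_gaussianPDF 0 1) (by fun_prop)]
  congr 1
  funext x
  simp only [Pi.mul_apply, gaussianPDF_def, ← ENNReal.ofReal_mul (gaussianPDFReal_nonneg 0 1 x)]
  simp only [gaussianPDFReal_def, NNReal.coe_one, mul_assoc, ← exp_add]
  ring_nf

lemma gaussianReal_prod_eq_withDensity (a b : ℝ) :
    (gaussianReal a 1).prod (gaussianReal b 1) =
      ((gaussianReal 0 1).prod (gaussianReal 0 1)).withDensity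
        fun z => ENNReal.ofReal (exp (a * z.1 + b * z.2 - (a ^ 2 + b ^ 2) / 2)) := by
  rw [gaussianReal_eq_withDensity a, gaussianReal_eq_withDensity b,
    prod_withDensity (by fun_prop) (by fun_prop)]
  congr 1
  funext z
  rw [← ENNReal.ofReal_mul (exp_pos _).le, ← exp_add]
  ring_nf

lemma gaussianReal_prod_map_linear (a b : ℝ) {p q : ℝ} (hpq : p ^ 2 + q ^ 2 = 1) :
    ((gaussianReal a 1).prod (gaussianReal b 1)).map (fun z => p * z.1 + q * z.2) =
      gaussianReal (p * a + q * b) 1 := by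
  have hcomp : (fun z : ℝ × ℝ => p * z.1 + q * z.2) =
      (fun z => z.1 + z.2) ∘ Prod.map (p * ·) (q * ·) := rfl
  rw [hcomp, ← Measure.map_map (by fun_prop) (by fun_prop),
    ← Measure.map_prod_map _ _ (by fun_prop) (by fun_prop), gaussianReal_map_const_mul,
    gaussianReal_map_const_mul]
  refine gaussianReal_conv_gaussianReal.trans ?_
  congr 1
  ext
  simp [hpq]

noncomputable def gaussianTail (m c : ℝ) : ℝ := (gaussianReal m 1).real (Ioi c)

lemma gaussianTail_eq_one_sub_cdf (m c : ℝ) :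
    gaussianTail m c = 1 - cdf (gaussianReal m 1) c := by
  rw [gaussianTail, cdf_eq_real, ← probReal_compl_eq_one_sub measurableSet_Iic, compl_Iic]

lemma continuous_gaussianTail (m : ℝ) : Continuous (gaussianTail m) := by
  have := nullSingletonClass_gaussianReal (μ := m) one_ne_zero
  have h (c : ℝ) : ContinuousOn (gaussianTail m) (Ici c) := by
    have := (integrable_const (1 : ℝ)).integrableOn.continuousOn_Ici_primitive_Ioi
      (μ := gaussianReal m 1) (a₀ := c)
    simp only [setIntegral_const, smul_eq_mul, mul_one] at this
    exact this
  exact continuous_iff_continuousAt.2 fun c =>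
    (h (c - 1)).continuousAt (Ici_mem_nhds (by linarith))

lemma strictAnti_gaussianTail (m : ℝ) : StrictAnti (gaussianTail m) := by
  intro c c' hcc'
  have hpos : 0 < (gaussianReal m 1).real (Ioc c c') := by
    refine ENNReal.toReal_pos (fun h0 => ?_) (measure_ne_top _ _)
    exact (not_le.2 hcc') (by simpa using gaussianReal_absolutelyContinuous' m one_ne_zero h0)
  rw [gaussianTail, gaussianTail, ← Ioc_union_Ioi_eq_Ioi hcc'.le,
    measureReal_union (Ioc_disjoint_Ioi le_rfl) measurableSet_Ioi]
  linarith

lemma tendsto_gaussianTail_atBot (m : ℝ) : Tendsto (gaussianTail m) atBot (𝓝 1) := by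
  rw [funext (gaussianTail_eq_one_sub_cdf m)]
  simpa using (tendsto_cdf_atBot (gaussianReal m 1)).const_sub 1

lemma tendsto_gaussianTail_atTop (m : ℝ) : Tendsto (gaussianTail m) atTop (𝓝 0) := by
  rw [funext (gaussianTail_eq_one_sub_cdf m)]
  simpa using (tendsto_cdf_atTop (gaussianReal m 1)).const_sub 1

lemma gaussianTail_pos (m c : ℝ) : 0 < gaussianTail m c :=
  measureReal_nonneg.trans_lt (strictAnti_gaussianTail m (lt_add_one c))

lemma gaussianTail_lt_one (m c : ℝ) : gaussianTail m c < 1 :=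
  (strictAnti_gaussianTail m (sub_one_lt c)).trans_le measureReal_le_one

lemma exists_gaussianTail_eq (m : ℝ) {x : ℝ} (hx0 : 0 < x) (hx1 : x < 1) :
    ∃ c, gaussianTail m c = x :=
  mem_range_of_exists_le_of_exists_ge (continuous_gaussianTail m)
    ((tendsto_gaussianTail_atTop m).eventually_le_const hx0).exists
    ((tendsto_gaussianTail_atBot m).eventually_const_le hx1).exists

lemma setOf_gaussianTail_lt_eq_Ioi {m c x : ℝ} (hc : gaussianTail m c = x) :
    {t | gaussianTail m t < x} = Ioi c := by
  ext t
  simp [← hc, (strictAnti_gaussianTail m).lt_iff_gt]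

lemma le_gaussianReal_real_setOf_gaussianTail_lt (m : ℝ) {x : ℝ} (hx : x ≤ 1) :
    x ≤ (gaussianReal m 1).real {t | gaussianTail m t < x} := by
  rcases le_or_gt x 0 with hx0 | hx0
  · exact hx0.trans measureReal_nonneg
  rcases hx.lt_or_eq with hx1 | rfl
  · obtain ⟨c, hc⟩ := exists_gaussianTail_eq m hx0 hx1
    rw [setOf_gaussianTail_lt_eq_Ioi hc, ← hc]
    rfl
  · simp [gaussianTail_lt_one]

end Gaussian

section GaussianHockeyStick

variable {α : ℝ}

/-- `exp (m * c - m ^ 2 / 2)` is the likelihood ratio of `N(m,1)` to `N(0,1)` at `c`, so the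
optimal test at that level is `{t > c}`. -/
lemma hockeyStick_gaussianReal_le_gaussianTail {m : ℝ} (hm : 0 ≤ m) (c : ℝ) :
    hockeyStick (exp (m * c - m ^ 2 / 2)) (gaussianReal m 1) (gaussianReal 0 1) ≤
      gaussianTail m c - exp (m * c - m ^ 2 / 2) * gaussianTail 0 c :=
  hockeyStick_le_of_eq_withDensity (gaussianReal_eq_withDensity m) (exp_pos _).le
    measurableSet_Ioi
    (fun x hx => ENNReal.ofReal_le_ofReal (exp_le_exp.2 (by nlinarith [mem_Ioi.1 hx])))
    (fun x hx => ENNReal.ofReal_le_ofReal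
      (exp_le_exp.2 (by nlinarith [not_lt.1 (mem_Ioi.not.1 hx)])))

lemma hockeyStick_prod_gaussianReal_le {m w B : ℝ} (hB : 0 ≤ B) (hmwB : m ^ 2 + w ^ 2 = B ^ 2)
    (hα : 0 < α) :
    hockeyStick α ((gaussianReal m 1).prod (gaussianReal w 1))
        ((gaussianReal 0 1).prod (gaussianReal 0 1)) ≤
      hockeyStick α (gaussianReal B 1) (gaussianReal 0 1) := by
  rcases hB.eq_or_lt with rfl | hB
  · obtain ⟨rfl, rfl⟩ : m = 0 ∧ w = 0 := by constructor <;> nlinarith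
    rw [hockeyStick_self hα.le, hockeyStick_self hα.le]
  have hpq : (m / B) ^ 2 + (w / B) ^ 2 = 1 := by
    rw [div_pow, div_pow, ← add_div, hmwB, div_self (by positivity)]
  set L : ℝ × ℝ → ℝ := fun z => m / B * z.1 + w / B * z.2
  have hL : Measurable L := by fun_prop
  set s := (log α + B ^ 2 / 2) / B
  -- the likelihood ratio exceeds `α` exactly on the half-plane `{L > s}`
  have hS (z : ℝ × ℝ) : z ∈ L ⁻¹' Ioi s ↔ log α < m * z.1 + w * z.2 - (m ^ 2 + w ^ 2) / 2 := by
    have hLz : L z * B = m * z.1 + w * z.2 := by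
      simp only [L]
      field_simp
    rw [mem_preimage, mem_Ioi, div_lt_iff₀ hB, hLz]
    constructor <;> intro h <;> linarith
  calc hockeyStick α ((gaussianReal m 1).prod (gaussianReal w 1))
        ((gaussianReal 0 1).prod (gaussianReal 0 1))
      ≤ ((gaussianReal m 1).prod (gaussianReal w 1)).real (L ⁻¹' Ioi s) -
          α * ((gaussianReal 0 1).prod (gaussianReal 0 1)).real (L ⁻¹' Ioi s) :=
        hockeyStick_le_of_eq_withDensity (gaussianReal_prod_eq_withDensity m w) hα.le
          (hL measurableSet_Ioi)
          (fun z hz => ENNReal.ofReal_le_ofReal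
            ((exp_log hα).symm.trans_le (exp_le_exp.2 ((hS z).1 hz).le)))
          (fun z hz => ENNReal.ofReal_le_ofReal
            ((exp_le_exp.2 (not_lt.1 (mt (hS z).2 hz))).trans_eq (exp_log hα)))
    _ = (gaussianReal B 1).real (Ioi s) - α * (gaussianReal 0 1).real (Ioi s) := by
        rw [← map_measureReal_apply hL measurableSet_Ioi,
          ← map_measureReal_apply hL measurableSet_Ioi, gaussianReal_prod_map_linear m w hpq,
          gaussianReal_prod_map_linear 0 0 hpq]
        congr 4
        · field_simp
          linarith
        · simp
    _ ≤ hockeyStick α (gaussianReal B 1) (gaussianReal 0 1) :=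
        le_hockeyStick hα.le _ _ measurableSet_Ioi

lemma hockeyStick_gaussianReal_mono {m m' : ℝ} (hmm' : |m| ≤ m') (hα : 0 < α) :
    hockeyStick α (gaussianReal m 1) (gaussianReal 0 1) ≤
      hockeyStick α (gaussianReal m' 1) (gaussianReal 0 1) := by
  set w := √(m' ^ 2 - m ^ 2)
  have hw : m ^ 2 + w ^ 2 = m' ^ 2 := by
    rw [sq_sqrt (sub_nonneg.2 (sq_le_sq' (abs_le.1 hmm').1 (abs_le.1 hmm').2)), add_sub_cancel]
  calc hockeyStick α (gaussianReal m 1) (gaussianReal 0 1)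
      = hockeyStick α (((gaussianReal m 1).prod (gaussianReal w 1)).map Prod.fst)
          (((gaussianReal 0 1).prod (gaussianReal 0 1)).map Prod.fst) := by simp
    _ ≤ hockeyStick α ((gaussianReal m 1).prod (gaussianReal w 1))
          ((gaussianReal 0 1).prod (gaussianReal 0 1)) :=
        hockeyStick_map_le hα.le measurable_fst
    _ ≤ hockeyStick α (gaussianReal m' 1) (gaussianReal 0 1) :=
        hockeyStick_prod_gaussianReal_le ((abs_nonneg m).trans hmm') hw hα

end GaussianHockeyStick

section Domination

variable {X Y : Type*} [MeasurableSpace X] [MeasurableSpace Y]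

/-- `μ`-GDP of the pair `(P, Q)` in the sense of Dong, Roth and Su. -/
def IsGaussianDominated (μ : ℝ) (P Q : Measure X) : Prop :=
  ∀ α : ℝ, 0 < α → hockeyStick α P Q ≤ hockeyStick α (gaussianReal μ 1) (gaussianReal 0 1)

variable {μ m : ℝ} {P Q : Measure X}

lemma IsGaussianDominated.mono {μ' : ℝ} (h : IsGaussianDominated μ P Q) (hμ : |μ| ≤ μ') :
    IsGaussianDominated μ' P Q :=
  fun α hα => (h α hα).trans (hockeyStick_gaussianReal_mono hμ hα)

lemma IsGaussianDominated.gaussianTail_zero_le [IsFiniteMeasure P] (h : IsGaussianDominated m P Q)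
    (hm : 0 ≤ m) {E : Set X} (hE : MeasurableSet E) {c : ℝ} (hc : gaussianTail m c ≤ P.real E) :
    gaussianTail 0 c ≤ Q.real E := by
  have hβ := exp_pos (m * c - m ^ 2 / 2)
  have := (le_hockeyStick hβ.le P Q hE).trans
    ((h _ hβ).trans (hockeyStick_gaussianReal_le_gaussianTail hm c))
  exact le_of_mul_le_mul_left (by linarith) hβ

lemma IsGaussianDominated.gaussianReal_real_setOf_gaussianTail_lt_le [IsProbabilityMeasure P]
    (h : IsGaussianDominated m P Q) (hm : 0 ≤ m) {E : Set X} (hE : MeasurableSet E) :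
    (gaussianReal 0 1).real {t | gaussianTail m t < P.real E} ≤ Q.real E := by
  rcases le_or_gt (P.real E) 0 with hx0 | hx0
  · have : {t | gaussianTail m t < P.real E} = ∅ :=
      eq_empty_of_forall_notMem fun t ht => (gaussianTail_pos m t).not_ge (le_of_lt ht |>.trans hx0)
    simp [this]
  rcases (measureReal_le_one : P.real E ≤ 1).lt_or_eq with hx1 | hx1
  · obtain ⟨c, hc⟩ := exists_gaussianTail_eq m hx0 hx1
    rw [setOf_gaussianTail_lt_eq_Ioi hc]
    exact h.gaussianTail_zero_le hm hE hc.le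
  · have hQ : 1 ≤ Q.real E := le_of_tendsto (tendsto_gaussianTail_atBot 0)
      (Eventually.of_forall fun c =>
        h.gaussianTail_zero_le hm hE ((gaussianTail_lt_one m c).le.trans hx1.ge))
    simpa [hx1, gaussianTail_lt_one] using hQ

theorem hockeyStick_compProd_le_prod_gaussianReal [IsFiniteMeasure P] [IsFiniteMeasure Q]
    {κ κ' : Kernel X Y} [IsMarkovKernel κ] [IsMarkovKernel κ'] (hm : 0 ≤ m)
    (h : ∀ᵐ a ∂Q, IsGaussianDominated m (κ a) (κ' a)) {α : ℝ} (hα : 0 < α) :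
    hockeyStick α (P ⊗ₘ κ) (Q ⊗ₘ κ') ≤
      hockeyStick α (P.prod (gaussianReal m 1)) (Q.prod (gaussianReal 0 1)) := by
  refine hockeyStick_le_of_forall_exists hα.le fun E hE => ?_
  -- replace each slice test by the Gaussian threshold test of the same size
  set x : X → ℝ := fun a => (κ a).real (Prod.mk a ⁻¹' E)
  have hx : Measurable x := (Kernel.measurable_kernel_prodMk_left hE).ennreal_toReal
  have hS : MeasurableSet {z : X × ℝ | gaussianTail m z.2 < x z.1} :=
    measurableSet_lt ((continuous_gaussianTail m).measurable.comp measurable_snd)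
      (hx.comp measurable_fst)
  refine ⟨_, hS, ?_, ?_⟩
  · rw [Measure.compProd_apply hE, Measure.prod_apply hS]
    refine lintegral_mono fun a => (ENNReal.toReal_le_toReal (by finiteness) (by finiteness)).1 ?_
    exact le_gaussianReal_real_setOf_gaussianTail_lt m measureReal_le_one
  · rw [Measure.compProd_apply hE, Measure.prod_apply hS]
    refine lintegral_mono_ae (h.mono fun a ha =>
      (ENNReal.toReal_le_toReal (by finiteness) (by finiteness)).1 ?_)
    exact ha.gaussianReal_real_setOf_gaussianTail_lt_le hm (measurable_prodMk_left hE)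

theorem IsGaussianDominated.compProd {μ₁ μ₂ B : ℝ} {ν ν' : Measure X} [IsProbabilityMeasure ν]
    [IsProbabilityMeasure ν'] {η η' : Kernel X Y} [IsMarkovKernel η] [IsMarkovKernel η']
    (h₁ : IsGaussianDominated μ₁ ν ν') (h₂ : ∀ᵐ a ∂ν', IsGaussianDominated μ₂ (η a) (η' a))
    (hB : 0 ≤ B) (hμB : μ₁ ^ 2 + μ₂ ^ 2 = B ^ 2) :
    IsGaussianDominated B (ν ⊗ₘ η) (ν' ⊗ₘ η') := fun α hα =>
  -- threshold tests need a nonnegative mean, and domination only depends on `|μ|`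
  calc hockeyStick α (ν ⊗ₘ η) (ν' ⊗ₘ η')
      ≤ hockeyStick α (ν.prod (gaussianReal |μ₂| 1)) (ν'.prod (gaussianReal 0 1)) :=
        hockeyStick_compProd_le_prod_gaussianReal (abs_nonneg μ₂)
          (h₂.mono fun a ha => ha.mono le_rfl) hα
    _ ≤ hockeyStick α ((gaussianReal |μ₂| 1).prod ν) ((gaussianReal 0 1).prod ν') := by
        rw [← Measure.prod_swap (μ := gaussianReal |μ₂| 1),
          ← Measure.prod_swap (μ := gaussianReal 0 1)]
        exact hockeyStick_map_le hα.le measurable_swap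
    _ = hockeyStick α (gaussianReal |μ₂| 1 ⊗ₘ Kernel.const ℝ ν)
          (gaussianReal 0 1 ⊗ₘ Kernel.const ℝ ν') := by
        rw [Measure.compProd_const, Measure.compProd_const]
    _ ≤ hockeyStick α ((gaussianReal |μ₂| 1).prod (gaussianReal |μ₁| 1))
          ((gaussianReal 0 1).prod (gaussianReal 0 1)) :=
        hockeyStick_compProd_le_prod_gaussianReal (abs_nonneg μ₁)
          (ae_of_all _ fun _ => by simpa using h₁.mono le_rfl) hα
    _ ≤ hockeyStick α (gaussianReal B 1) (gaussianReal 0 1) :=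
        hockeyStick_prod_gaussianReal_le hB (by rw [sq_abs, sq_abs]; linarith) hα

end Domination

theorem two_step_adaptive_composition_gdp_general {Ω₁ Ω₂ : Type*}
    [MeasurableSpace Ω₁] [MeasurableSpace Ω₂]
    (ν ν' : Measure Ω₁) [IsProbabilityMeasure ν] [IsProbabilityMeasure ν']
    (η η' : Kernel Ω₁ Ω₂) [IsMarkovKernel η] [IsMarkovKernel η']
    (μ₁ : ℝ)
    (hdom₁ : ∀ α : ℝ, 0 < α →
      max (hockeyStick α ν ν') (hockeyStick α ν' ν)
        ≤ hockeyStick α (gaussianReal μ₁ 1) (gaussianReal 0 1))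
    (μ₂ : Ω₁ → ℝ)
    (hdom₂ : ∀ (a : Ω₁) (α : ℝ), 0 < α →
      max (hockeyStick α (η a) (η' a)) (hockeyStick α (η' a) (η a))
        ≤ hockeyStick α (gaussianReal (μ₂ a) 1) (gaussianReal 0 1))
    (B : ℝ) (hB : 0 ≤ B)
    (hbudget : ∀ᵐ a ∂ν, μ₁ ^ 2 + μ₂ a ^ 2 ≤ B ^ 2)
    (hbudget' : ∀ᵐ a ∂ν', μ₁ ^ 2 + μ₂ a ^ 2 ≤ B ^ 2) :
    ∀ α : ℝ, 0 < α →
      max (hockeyStick α (ν ⊗ₘ η) (ν' ⊗ₘ η'))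
          (hockeyStick α (ν' ⊗ₘ η') (ν ⊗ₘ η))
        ≤ hockeyStick α (gaussianReal B 1) (gaussianReal 0 1) := by
  intro α hα
  obtain ⟨a₀, ha₀⟩ := hbudget.exists
  -- the second step gets the whole remaining budget `m`
  set m := √(B ^ 2 - μ₁ ^ 2)
  have hm : μ₁ ^ 2 + m ^ 2 = B ^ 2 := by
    rw [sq_sqrt (by nlinarith [sq_nonneg (μ₂ a₀)]), add_sub_cancel]
  have hη {a : Ω₁} (ha : μ₁ ^ 2 + μ₂ a ^ 2 ≤ B ^ 2) :
      IsGaussianDominated m (η a) (η' a) ∧ IsGaussianDominated m (η' a) (η a) := by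
    have hμ₂ : |μ₂ a| ≤ m := abs_le_sqrt (by linarith)
    exact ⟨IsGaussianDominated.mono (fun β hβ => (le_max_left _ _).trans (hdom₂ a β hβ)) hμ₂,
      IsGaussianDominated.mono (fun β hβ => (le_max_right _ _).trans (hdom₂ a β hβ)) hμ₂⟩
  have h₁ : IsGaussianDominated μ₁ ν ν' := fun β hβ => (le_max_left _ _).trans (hdom₁ β hβ)
  have h₁' : IsGaussianDominated μ₁ ν' ν := fun β hβ => (le_max_right _ _).trans (hdom₁ β hβ)
  exact max_le (h₁.compProd (hbudget'.mono fun a ha => (hη ha).1) hB hm α hα)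
    (h₁'.compProd (hbudget.mono fun a ha => (hη ha).2) hB hm α hα)

/-- Two-step fully adaptive composition (key inductive step): if the first mechanism has GDP
parameter `μ₁`, the second (adaptively chosen) mechanism has conditional GDP parameter
`μ₂(a)`, and `μ₁² + μ₂(a)² ≤ B²` almost surely, then the composition-products are dominated
in hockey-stick divergence (in both directions) by the pair `(N(B,1), N(0,1))`. -/
theorem two_step_adaptive_composition_gdp {Ω₁ Ω₂ : Type*}
    [MeasurableSpace Ω₁] [MeasurableSpace Ω₂]
    (ν ν' : Measure Ω₁) [IsProbabilityMeasure ν] [IsProbabilityMeasure ν']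
    (η η' : Kernel Ω₁ Ω₂) [IsMarkovKernel η] [IsMarkovKernel η']
    (μ₁ : ℝ) (hμ₁ : 0 ≤ μ₁)
    (hdom₁ : ∀ α : ℝ, 0 < α →
      max (hockeyStick α ν ν') (hockeyStick α ν' ν)
        ≤ hockeyStick α (gaussianReal μ₁ 1) (gaussianReal 0 1))
    (μ₂ : Ω₁ → ℝ) (hμ₂meas : Measurable μ₂) (hμ₂0 : ∀ a, 0 ≤ μ₂ a)
    (hdom₂ : ∀ (a : Ω₁) (α : ℝ), 0 < α →
      max (hockeyStick α (η a) (η' a)) (hockeyStick α (η' a) (η a))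
        ≤ hockeyStick α (gaussianReal (μ₂ a) 1) (gaussianReal 0 1))
    (B : ℝ) (hB : 0 ≤ B)
    (hbudget : ∀ᵐ a ∂ν, μ₁ ^ 2 + μ₂ a ^ 2 ≤ B ^ 2)
    (hbudget' : ∀ᵐ a ∂ν', μ₁ ^ 2 + μ₂ a ^ 2 ≤ B ^ 2) :
    ∀ α : ℝ, 0 < α →
      max (hockeyStick α (ν ⊗ₘ η) (ν' ⊗ₘ η'))
          (hockeyStick α (ν' ⊗ₘ η') (ν ⊗ₘ η))
        ≤ hockeyStick α (gaussianReal B 1) (gaussianReal 0 1) :=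
  two_step_adaptive_composition_gdp_general ν ν' η η' μ₁ hdom₁ μ₂ hdom₂ B hB hbudget hbudget'
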